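/- arXiv:1909.07715 — 2 statements merged into one kernel-verified Lean document; each statement's English description precedes it below -/
import Mathlib

section
/- For a simple, strongly connected, finite weighted directed graph and distinct vertices x, y, and all ε ∈ (0,1], one has κ_ε(x,y)/ε ≤ ℋ(x,y)/d(x,y), where ℋ(x,y) = −(ℋ_x + ←ℋ_y) is the mixed asymptotic mean curvature. -/
open Finset Filter Topology MeasureTheory
open scoped Classical

noncomputable section

variable {V : Type*}

/-- Vertex weight `μ(x) = Σ_y μ_{xy}`. -/
def vdeg [Fintype V] (μ : V → V → ℝ) (x : V) : ℝ := ∑ y, μ x y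

/-- Transition probability kernel `P(x,y) = μ_{xy}/μ(x)`. -/
def transP [Fintype V] (μ : V → V → ℝ) (x y : V) : ℝ := μ x y / vdeg μ x

/-- `m` is the Perron measure of `(V,μ)`. -/
def IsPerron [Fintype V] (μ : V → V → ℝ) (m : V → ℝ) : Prop :=
  (∀ x, 0 < m x) ∧ (∑ x, m x = 1) ∧ ∀ x, m x = ∑ y, m y * transP μ y x

/-- Mean transition probability kernel `𝒫 = (P + ←P)/2`. -/
def meanK [Fintype V] (μ : V → V → ℝ) (m : V → ℝ) (x y : V) : ℝ :=
  (transP μ x y + m y / m x * transP μ y x) / 2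

/-- There is a directed path of length `n` from `x` to `y`. -/
def HasPathLen (μ : V → V → ℝ) (x y : V) (n : ℕ) : Prop :=
  ∃ c : ℕ → V, c 0 = x ∧ c n = y ∧ ∀ i < n, 0 < μ (c i) (c (i + 1))

/-- The (non-symmetric) graph distance. -/
def gdist (μ : V → V → ℝ) (x y : V) : ℝ :=
  sInf {r : ℝ | ∃ n : ℕ, (r : ℝ) = (n : ℝ) ∧ HasPathLen μ x y n}

/-- The graph is simple: no loops. -/
def IsSimpleW (μ : V → V → ℝ) : Prop := ∀ x, μ x x = 0

/-- The edge weight is nonnegative. -/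
def Nonneg (μ : V → V → ℝ) : Prop := ∀ x y, 0 ≤ μ x y

/-- The graph is strongly connected. -/
def StronglyConnectedW (μ : V → V → ℝ) : Prop := ∀ x y, ∃ n, HasPathLen μ x y n

/-- `π` is a coupling of the probability measures `ν₀, ν₁`. -/
def IsCoupling [Fintype V] (π : V → V → ℝ) (ν₀ ν₁ : V → ℝ) : Prop :=
  (∀ x y, 0 ≤ π x y) ∧ (∀ x, ∑ y, π x y = ν₀ x) ∧ (∀ y, ∑ x, π x y = ν₁ y)

/-- The L¹-Wasserstein distance with cost `d`. -/
def Wass [Fintype V] (d : V → V → ℝ) (ν₀ ν₁ : V → ℝ) : ℝ :=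
  sInf {c : ℝ | ∃ π, IsCoupling π ν₀ ν₁ ∧ c = ∑ x, ∑ y, d x y * π x y}

/-- The probability measure `ν^ε_x`. -/
def nu [Fintype V] (P : V → V → ℝ) (ε : ℝ) (x z : V) : ℝ :=
  if z = x then 1 - ε else ε * P x z

/-- `κ_ε(x,y) = 1 − W(ν^ε_x, ν^ε_y)/d(x,y)`. -/
def kappaEps [Fintype V] (μ : V → V → ℝ) (m : V → ℝ) (ε : ℝ) (x y : V) : ℝ :=
  1 - Wass (gdist μ) (nu (meanK μ m) ε x) (nu (meanK μ m) ε y) / gdist μ x y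

/-- The (positive) Chung Laplacian associated with a kernel `P`. -/
def chungL [Fintype V] (P : V → V → ℝ) (f : V → ℝ) (x : V) : ℝ :=
  f x - ∑ y, P x y * f y

/-- The negative Laplacian `Δ = −ℒ`. -/
def negL [Fintype V] (P : V → V → ℝ) (f : V → ℝ) (x : V) : ℝ :=
  (∑ y, P x y * f y) - f x

/-- `f` is 1-Lipschitz with respect to the non-symmetric distance `d`. -/
def Lip1 (d : V → V → ℝ) (f : V → ℝ) : Prop := ∀ x y, f y - f x ≤ d x y

/-- The asymptotic mean curvature `ℋ_x = ℒρ_x(x)`. -/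
def Hout [Fintype V] (μ : V → V → ℝ) (m : V → ℝ) (x : V) : ℝ :=
  chungL (meanK μ m) (fun y => gdist μ x y) x

/-- The reverse asymptotic mean curvature `←ℋ_x = ℒ←ρ_x(x)`. -/
def Hin [Fintype V] (μ : V → V → ℝ) (m : V → ℝ) (x : V) : ℝ :=
  chungL (meanK μ m) (fun y => gdist μ y x) x

/-- The mixed asymptotic mean curvature `ℋ(x,y) = −(ℋ_x + ←ℋ_y)`. -/
def Hmix [Fintype V] (μ : V → V → ℝ) (m : V → ℝ) (x y : V) : ℝ :=
  -(Hout μ m x + Hin μ m y)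

/-- The neighborhood `𝒩_x = N_x ∪ ←N_x`. -/
def nbr [Fintype V] (μ : V → V → ℝ) (x : V) : Finset V :=
  Finset.univ.filter (fun y => 0 < μ x y ∨ 0 < μ y x)

/-!
Testing the Kantorovich bound with the 1-Lipschitz function `d(x, ·)` gives
`W(ν^ε_x, ν^ε_y) ≥ ∫ d(x, ·) dν^ε_y - ∫ d(x, ·) dν^ε_x`. Here `∫ d(x, ·) dν^ε_x = -ε ℋ_x`, and the
triangle inequality `d(x,b) ≥ d(x,y) - d(b,y)` gives `∫ d(x, ·) dν^ε_y ≥ d(x,y) + ε ←ℋ_y`. Hence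
`W ≥ d(x,y) - ε ℋ(x,y)`, which is the claim after dividing by `ε d(x,y)`.
-/

section Distance

variable {μ : V → V → ℝ}

theorem HasPathLen.trans {x y z : V} {n k : ℕ} (hxy : HasPathLen μ x y n)
    (hyz : HasPathLen μ y z k) : HasPathLen μ x z (n + k) := by
  obtain ⟨c, hc0, hcn, hc⟩ := hxy
  obtain ⟨c', hc'0, hc'k, hc'⟩ := hyz
  refine ⟨fun i => if i ≤ n then c i else c' (i - n), by simp [hc0], ?_, fun i hi => ?_⟩
  · rcases k.eq_zero_or_pos with rfl | hk
    · simp [hcn, ← hc'0, hc'k]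
    · simp [show ¬n + k ≤ n by omega, hc'k]
  · rcases lt_or_ge i n with hin | hni
    · by_cases hsucc : i + 1 ≤ n
      · simpa [hin.le, hsucc] using hc i hin
      · obtain rfl : i + 1 = n := by omega
        simpa [hsucc, ← hcn, hc'0] using hc i hin
    · have hsub : i + 1 - n = i - n + 1 := by omega
      have hleft : (if i ≤ n then c i else c' (i - n)) = c' (i - n) := by
        rcases hni.eq_or_lt with rfl | hlt
        · simp [hcn, hc'0]
        · simp [hlt.not_ge]
      simpa [show ¬i + 1 ≤ n by omega, hsub, hleft] using hc' (i - n) (by omega)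

theorem hasPathLen_sInf (hconn : StronglyConnectedW μ) (x y : V) :
    HasPathLen μ x y (sInf {n : ℕ | HasPathLen μ x y n}) :=
  Nat.sInf_mem (hconn x y)

theorem gdist_eq_sInf (hconn : StronglyConnectedW μ) (x y : V) :
    gdist μ x y = (sInf {n : ℕ | HasPathLen μ x y n} : ℕ) := by
  refine IsLeast.csInf_eq ⟨⟨_, rfl, hasPathLen_sInf hconn x y⟩, ?_⟩
  rintro r ⟨n, rfl, hn⟩
  exact_mod_cast Nat.sInf_le hn

theorem gdist_self (hconn : StronglyConnectedW μ) (x : V) : gdist μ x x = 0 := by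
  have hnil : HasPathLen μ x x 0 := ⟨fun _ => x, rfl, rfl, by simp⟩
  rw [gdist_eq_sInf hconn, Nat.sInf_eq_zero.2 (.inl hnil)]
  simp

theorem gdist_pos (hconn : StronglyConnectedW μ) {x y : V} (hxy : x ≠ y) : 0 < gdist μ x y := by
  rw [gdist_eq_sInf hconn]
  obtain ⟨c, hc0, hcn, -⟩ := hasPathLen_sInf hconn x y
  refine Nat.cast_pos.2 (Nat.pos_of_ne_zero fun h => hxy ?_)
  rw [← hc0, ← hcn, h]

theorem gdist_triangle (hconn : StronglyConnectedW μ) (x y z : V) :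
    gdist μ x z ≤ gdist μ x y + gdist μ y z := by
  simp only [gdist_eq_sInf hconn]
  exact_mod_cast Nat.sInf_le ((hasPathLen_sInf hconn x y).trans (hasPathLen_sInf hconn y z))

end Distance

section Transport

variable [Fintype V] {d π : V → V → ℝ} {ν₀ ν₁ f : V → ℝ}

theorem IsCoupling.sum_sub_sum_le (hf : Lip1 d f) (hπ : IsCoupling π ν₀ ν₁) :
    ∑ b, f b * ν₁ b - ∑ a, f a * ν₀ a ≤ ∑ a, ∑ b, d a b * π a b := by
  obtain ⟨hπ_nonneg, hπ₀, hπ₁⟩ := hπ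
  calc ∑ b, f b * ν₁ b - ∑ a, f a * ν₀ a = ∑ a, ∑ b, (f b - f a) * π a b := by
        simp only [← hπ₀, ← hπ₁, Finset.mul_sum, sub_mul, Finset.sum_sub_distrib]
        rw [Finset.sum_comm]
    _ ≤ ∑ a, ∑ b, d a b * π a b :=
        Finset.sum_le_sum fun a _ => Finset.sum_le_sum fun b _ =>
          mul_le_mul_of_nonneg_right (hf a b) (hπ_nonneg a b)

theorem isCoupling_mul (h₀ : ∀ a, 0 ≤ ν₀ a) (h₁ : ∀ b, 0 ≤ ν₁ b) (hs₀ : ∑ a, ν₀ a = 1)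
    (hs₁ : ∑ b, ν₁ b = 1) : IsCoupling (fun a b => ν₀ a * ν₁ b) ν₀ ν₁ :=
  ⟨fun a b => mul_nonneg (h₀ a) (h₁ b), fun a => by rw [← Finset.mul_sum, hs₁, mul_one],
    fun b => by rw [← Finset.sum_mul, hs₀, one_mul]⟩

theorem sum_sub_sum_le_wass (hf : Lip1 d f) (hπ : ∃ π, IsCoupling π ν₀ ν₁) :
    ∑ b, f b * ν₁ b - ∑ a, f a * ν₀ a ≤ Wass d ν₀ ν₁ := by
  obtain ⟨π, hπ⟩ := hπ
  refine le_csInf ⟨_, π, hπ, rfl⟩ ?_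
  rintro c ⟨π', hπ', rfl⟩
  exact hπ'.sum_sub_sum_le hf

end Transport

section Nu

variable [Fintype V] {P : V → V → ℝ} {ε : ℝ} {a : V}

theorem sum_mul_nu (hPa : P a a = 0) (f : V → ℝ) :
    ∑ b, f b * nu P ε a b = (1 - ε) * f a + ε * ∑ b, P a b * f b := by
  rw [Fintype.sum_eq_add_sum_compl a, Fintype.sum_eq_add_sum_compl a (fun b => P a b * f b),
    hPa, zero_mul, zero_add, Finset.mul_sum]
  congr 1
  · simp [nu, mul_comm]
  · refine Finset.sum_congr rfl fun b hb => ?_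
    rw [nu, if_neg (by simpa using hb)]
    ring

theorem sum_nu (hP : P ∈ Matrix.rowStochastic ℝ V) (hPa : P a a = 0) :
    ∑ b, nu P ε a b = 1 := by
  simpa [Matrix.sum_row_of_mem_rowStochastic hP] using sum_mul_nu (ε := ε) hPa (fun _ => 1)

theorem nu_nonneg (hP : P ∈ Matrix.rowStochastic ℝ V) (hε₀ : 0 ≤ ε) (hε₁ : ε ≤ 1) (b : V) :
    0 ≤ nu P ε a b := by
  unfold nu
  split_ifs
  · linarith
  · exact mul_nonneg hε₀ (Matrix.nonneg_of_mem_rowStochastic hP)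

theorem le_wass_nu {d : V → V → ℝ} (hP : P ∈ Matrix.rowStochastic ℝ V)
    (hPdiag : ∀ a, P a a = 0) (hd : ∀ a, d a a = 0) (htri : ∀ a b c, d a c ≤ d a b + d b c)
    (hε₀ : 0 ≤ ε) (hε₁ : ε ≤ 1) (x y : V) :
    d x y + ε * (chungL P (d x) x + chungL P (fun b => d b y) y)
      ≤ Wass d (nu P ε x) (nu P ε y) := by
  have hlip : Lip1 d (d x) := fun a b => by linarith [htri x a b]
  have hcoup : ∃ π, IsCoupling π (nu P ε x) (nu P ε y) :=
    ⟨_, isCoupling_mul (nu_nonneg hP hε₀ hε₁) (nu_nonneg hP hε₀ hε₁) (sum_nu hP (hPdiag x))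
      (sum_nu hP (hPdiag y))⟩
  have hy_side : d x y + chungL P (fun b => d b y) y ≤ ∑ b, P y b * d x b := by
    calc d x y + chungL P (fun b => d b y) y = ∑ b, P y b * (d x y - d b y) := by
          simp only [chungL, hd, mul_sub, Finset.sum_sub_distrib, ← Finset.sum_mul,
            Matrix.sum_row_of_mem_rowStochastic hP]
          ring
      _ ≤ ∑ b, P y b * d x b :=
          Finset.sum_le_sum fun b _ => mul_le_mul_of_nonneg_left (by linarith [htri x b y])
            (Matrix.nonneg_of_mem_rowStochastic hP)
  calc d x y + ε * (chungL P (d x) x + chungL P (fun b => d b y) y)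
      ≤ ∑ b, d x b * nu P ε y b - ∑ a, d x a * nu P ε x a := by
        rw [sum_mul_nu (hPdiag y), sum_mul_nu (hPdiag x), chungL, hd, zero_sub]
        nlinarith
    _ ≤ Wass d (nu P ε x) (nu P ε y) := sum_sub_sum_le_wass hlip hcoup

end Nu

section MeanKernel

variable [Fintype V] {μ : V → V → ℝ} {m : V → ℝ}

theorem vdeg_pos [Nontrivial V] (hnn : Nonneg μ) (hconn : StronglyConnectedW μ) (a : V) :
    0 < vdeg μ a := by
  obtain ⟨b, hab⟩ := exists_ne a
  obtain ⟨n, c, hc0, hcn, hc⟩ := hconn a b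
  have hn : 0 < n := Nat.pos_of_ne_zero fun h => hab (by rw [← hc0, ← hcn, h])
  have hedge : 0 < μ a (c 1) := hc0 ▸ hc 0 hn
  exact Finset.sum_pos' (fun z _ => hnn a z) ⟨c 1, Finset.mem_univ _, hedge⟩

theorem transP_mem_rowStochastic [Nontrivial V] (hnn : Nonneg μ) (hconn : StronglyConnectedW μ) :
    transP μ ∈ Matrix.rowStochastic ℝ V :=
  Matrix.mem_rowStochastic_iff_sum.2
    ⟨fun a b => div_nonneg (hnn a b) (vdeg_pos hnn hconn a).le,
      fun a => by rw [← div_self (vdeg_pos hnn hconn a).ne', vdeg, Finset.sum_div]; rfl⟩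

theorem meanK_mem_rowStochastic [Nontrivial V] (hnn : Nonneg μ) (hconn : StronglyConnectedW μ)
    (hm : IsPerron μ m) : meanK μ m ∈ Matrix.rowStochastic ℝ V := by
  obtain ⟨hm_pos, -, hm_fix⟩ := hm
  have hP := transP_mem_rowStochastic hnn hconn
  refine Matrix.mem_rowStochastic_iff_sum.2 ⟨fun a b => ?_, fun a => ?_⟩
  · have := Matrix.nonneg_of_mem_rowStochastic hP (i := a) (j := b)
    have := Matrix.nonneg_of_mem_rowStochastic hP (i := b) (j := a)
    have := hm_pos a
    have := hm_pos b
    unfold meanK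
    positivity
  · -- the reversed kernel is stochastic because `m` is stationary
    have hrev : ∑ b, m b / m a * transP μ b a = 1 := by
      simp_rw [div_mul_eq_mul_div, ← Finset.sum_div, ← hm_fix a, div_self (hm_pos a).ne']
    simp only [meanK, ← Finset.sum_div, Finset.sum_add_distrib,
      Matrix.sum_row_of_mem_rowStochastic hP, hrev]
    norm_num

theorem meanK_self (hsimple : IsSimpleW μ) (a : V) : meanK μ m a a = 0 := by
  simp [meanK, transP, hsimple a]

end MeanKernel

/-- `κ_ε(x,y)/ε ≤ ℋ(x,y)/d(x,y)`. -/
theorem kappaEps_div_le_Hmix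
    {V : Type*} [Fintype V] (μ : V → V → ℝ) (m : V → ℝ)
    (hnn : Nonneg μ) (hsimple : IsSimpleW μ) (hconn : StronglyConnectedW μ)
    (hm : IsPerron μ m) (x y : V) (hxy : x ≠ y)
    (ε : ℝ) (hε : ε ∈ Set.Ioc (0:ℝ) 1) :
    kappaEps μ m ε x y / ε ≤ Hmix μ m x y / gdist μ x y := by
  have : Nontrivial V := ⟨⟨x, y, hxy⟩⟩
  have hD := gdist_pos hconn hxy
  have hW := le_wass_nu (meanK_mem_rowStochastic hnn hconn hm) (meanK_self hsimple)
    (gdist_self hconn) (gdist_triangle hconn) hε.1.le hε.2 x y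
  have hκ : kappaEps μ m ε x y ≤ Hmix μ m x y / gdist μ x y * ε := by
    rw [kappaEps, div_mul_eq_mul_div, sub_le_iff_le_add, ← add_div, le_div_iff₀ hD]
    simp only [Hmix, Hout, Hin]
    linarith
  exact (div_le_iff₀ hε.1).2 hκ
end
end

section
/- For the (α,β)-weighted Cartesian product, the distance function is the ℓ¹-sum: d_{(α,β)}((x,x'),(y,y')) = d(x,y) + d'(x',y'), and for functions f : V → ℝ, f' : V' → ℝ and 𝐟(x,x') := f(x) + f'(x'), the product Laplacian satisfies ℒ_{(α,β)}𝐟(x,x') = (β/(α+β))ℒf(x) + (α/(α+β))ℒ'f'(x'). -/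
open Finset Filter Topology MeasureTheory
open scoped Classical

noncomputable section

variable {V : Type*}

/-- The `(α,β)`-weighted Cartesian product edge weight. -/
def prodW {V V' : Type*} [Fintype V] [Fintype V']
    (μ : V → V → ℝ) (μ' : V' → V' → ℝ) (α β : ℝ) :
    V × V' → V × V' → ℝ :=
  fun p q =>
    β * vdeg μ' p.2 * μ p.1 q.1 * (if q.2 = p.2 then 1 else 0)
      + α * vdeg μ p.1 * μ' p.2 q.2 * (if q.1 = p.1 then 1 else 0)

/-!
A step of the product walk moves in exactly one factor, so a path in the product projects to
paths in the two factors of total length at most its own; conversely a path in the first factor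
followed by one in the second is a path in the product. Hence the distance is the ℓ¹-sum.

The transition kernel of the product is the convex combination
`β/(α+β) · P ⊗ I + α/(α+β) · I ⊗ P'`. Therefore `m ⊗ m'` is stationary for it, and by uniqueness
of the Perron measure of a strongly connected graph it is the Perron measure `M`. The mean kernel
then splits in the same way, and since both factor kernels are stochastic, the Laplacian of
`f(x) + f'(x')` splits into the two factor Laplacians.
-/

section Paths

variable {W : Type*} {μ : W → W → ℝ}

lemma hasPathLen_zero_iff {x y : W} : HasPathLen μ x y 0 ↔ x = y := by
  constructor
  · rintro ⟨c, rfl, rfl, -⟩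
    rfl
  · rintro rfl
    exact ⟨fun _ => x, rfl, rfl, fun i hi => absurd hi (Nat.not_lt_zero i)⟩

lemma hasPathLen_succ_iff {x y : W} {n : ℕ} :
    HasPathLen μ x y (n + 1) ↔ ∃ z, 0 < μ x z ∧ HasPathLen μ z y n := by
  constructor
  · rintro ⟨c, rfl, hcn, hc⟩
    exact ⟨c 1, hc 0 n.succ_pos, fun i => c (i + 1), rfl, hcn, fun i hi => hc (i + 1) (by omega)⟩
  · rintro ⟨z, hxz, c, rfl, hcn, hc⟩
    refine ⟨fun i => Nat.casesOn i x c, rfl, hcn, ?_⟩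
    rintro (_ | i) hi
    · exact hxz
    · exact hc i (by omega)

lemma HasPathLen.append {x y z : W} {k l : ℕ} (hk : HasPathLen μ x y k)
    (hl : HasPathLen μ y z l) : HasPathLen μ x z (k + l) := by
  induction k generalizing x with
  | zero => rwa [hasPathLen_zero_iff.1 hk, zero_add]
  | succ k ih =>
    obtain ⟨w, hxw, hw⟩ := hasPathLen_succ_iff.1 hk
    rw [Nat.add_right_comm]
    exact hasPathLen_succ_iff.2 ⟨w, hxw, ih hw⟩

lemma HasPathLen.map {W' : Type*} {ν : W' → W' → ℝ} (f : W → W')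
    (hf : ∀ a b, 0 < μ a b → 0 < ν (f a) (f b)) {x y : W} {n : ℕ}
    (h : HasPathLen μ x y n) : HasPathLen ν (f x) (f y) n := by
  obtain ⟨c, rfl, rfl, hc⟩ := h
  exact ⟨f ∘ c, rfl, rfl, fun i hi => hf _ _ (hc i hi)⟩

lemma HasPathLen.induction_backward {S : W → Prop} (hS : ∀ y z, 0 < μ y z → S z → S y)
    {x y : W} {n : ℕ} (h : HasPathLen μ y x n) (hx : S x) : S y := by
  induction n generalizing y with
  | zero => rwa [hasPathLen_zero_iff.1 h]
  | succ n ih =>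
    obtain ⟨z, hyz, hz⟩ := hasPathLen_succ_iff.1 h
    exact hS y z hyz (ih hz)

lemma gdist_eq_find {x y : W} (h : ∃ n, HasPathLen μ x y n) :
    gdist μ x y = Nat.find h := by
  refine le_antisymm (csInf_le ⟨0, ?_⟩ ⟨_, rfl, Nat.find_spec h⟩)
    (le_csInf ⟨_, _, rfl, Nat.find_spec h⟩ ?_)
  · rintro r ⟨n, rfl, -⟩
    positivity
  · rintro r ⟨n, rfl, hn⟩
    exact_mod_cast Nat.find_le hn

end Paths

section Weights

variable {W : Type*} [Fintype W] {μ : W → W → ℝ} {m M : W → ℝ}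

lemma vdeg_nonneg (hnn : Nonneg μ) (x : W) : 0 ≤ vdeg μ x :=
  Finset.sum_nonneg fun y _ => hnn x y

lemma transP_nonneg (hnn : Nonneg μ) (x y : W) : 0 ≤ transP μ x y :=
  div_nonneg (hnn x y) (vdeg_nonneg hnn x)

lemma transP_pos (hnn : Nonneg μ) {x y : W} (h : 0 < μ x y) : 0 < transP μ x y :=
  div_pos h (h.trans_le (Finset.single_le_sum (f := μ x) (fun z _ => hnn x z) (mem_univ y)))

lemma sum_transP {x : W} (h : vdeg μ x ≠ 0) : ∑ y, transP μ x y = 1 := by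
  simp only [transP, ← Finset.sum_div]
  exact div_self h

lemma sum_meanK (hm : IsPerron μ m) {x : W} (h : vdeg μ x ≠ 0) : ∑ y, meanK μ m x y = 1 := by
  have hin : ∑ y, m y / m x * transP μ y x = 1 := by
    simp only [div_mul_eq_mul_div, ← Finset.sum_div, ← hm.2.2 x]
    exact div_self (hm.1 x).ne'
  simp only [meanK, ← Finset.sum_div, Finset.sum_add_distrib, sum_transP h, hin]
  norm_num

lemma IsPerron.univ_nonempty (hm : IsPerron μ m) : (univ : Finset W).Nonempty :=
  Finset.nonempty_of_sum_ne_zero (f := m) (by rw [hm.2.1]; exact one_ne_zero)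

lemma IsPerron.exists_ne_zero (hm : IsPerron μ m) : ∃ x y, μ x y ≠ 0 := by
  by_contra! h
  obtain ⟨x, -⟩ := hm.univ_nonempty
  have hx := hm.2.2 x
  simp only [transP, h, zero_div, mul_zero, Finset.sum_const_zero] at hx
  exact (hm.1 x).ne' hx

lemma vdeg_pos_s9 (hnn : Nonneg μ) (hc : StronglyConnectedW μ) (hμ : ∃ x y, μ x y ≠ 0) (x : W) :
    0 < vdeg μ x := by
  refine (vdeg_nonneg hnn x).lt_of_ne fun h0 => ?_
  have hx : ∀ y, μ x y = 0 := fun y =>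
    (Finset.sum_eq_zero_iff_of_nonneg fun z _ => hnn x z).1 h0.symm y (mem_univ y)
  have hall : ∀ y, y = x := by
    intro y
    obtain ⟨_ | n, h⟩ := hc x y
    · exact (hasPathLen_zero_iff.1 h).symm
    · obtain ⟨z, hxz, -⟩ := hasPathLen_succ_iff.1 h
      exact absurd (hx z) hxz.ne'
  obtain ⟨a, b, hab⟩ := hμ
  exact hab (hall a ▸ hx b)

/-- The ratio `M / m` attains its minimum at some `x₀`; by stationarity the set where it is
attained is closed under predecessors, hence is everything. -/
lemma IsPerron.unique (hnn : Nonneg μ) (hc : StronglyConnectedW μ) (hm : IsPerron μ m)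
    (hM : IsPerron μ M) : M = m := by
  obtain ⟨x₀, -, hx₀⟩ := Finset.exists_min_image univ (fun z => M z / m z) hm.univ_nonempty
  set c := M x₀ / m x₀
  have hle : ∀ w, c * m w ≤ M w := fun w => (le_div_iff₀ (hm.1 w)).1 (hx₀ w (mem_univ w))
  have hclosed : ∀ y z, 0 < μ y z → M z = c * m z → M y = c * m y := by
    intro y z hyz hz
    have hsum : ∑ w, (M w - c * m w) * transP μ w z = 0 := by
      simp only [sub_mul, Finset.sum_sub_distrib, mul_assoc, ← Finset.mul_sum, ← hM.2.2,
        ← hm.2.2, hz, sub_self]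
    have hy := (Finset.sum_eq_zero_iff_of_nonneg fun w _ =>
      mul_nonneg (sub_nonneg.2 (hle w)) (transP_nonneg hnn w z)).1 hsum y (mem_univ y)
    linarith [(mul_eq_zero.1 hy).resolve_right (transP_pos hnn hyz).ne']
  have hall : ∀ y, M y = c * m y := fun y =>
    (hc y x₀).choose_spec.induction_backward hclosed (div_mul_cancel₀ _ (hm.1 x₀).ne').symm
  have hc1 : c = 1 := by
    simpa only [hall, ← Finset.mul_sum, hm.2.1, mul_one] using hM.2.1
  funext y
  rw [hall, hc1, one_mul]

end Weights

section Cartesian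

variable {V V' : Type*} [Fintype V] [Fintype V']

def cartesianKernel (a b : ℝ) (P : V → V → ℝ) (Q : V' → V' → ℝ) (p q : V × V') : ℝ :=
  a * P p.1 q.1 * (if q.2 = p.2 then 1 else 0) + b * Q p.2 q.2 * (if q.1 = p.1 then 1 else 0)

lemma sum_cartesianKernel_mul (a b : ℝ) (P : V → V → ℝ) (Q : V' → V' → ℝ)
    (g : V × V' → ℝ) (p : V × V') :
    ∑ q, cartesianKernel a b P Q p q * g q
      = a * ∑ y, P p.1 y * g (y, p.2) + b * ∑ y', Q p.2 y' * g (p.1, y') := by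
  simp only [cartesianKernel, add_mul, mul_ite, mul_one, mul_zero, ite_mul, zero_mul,
    Finset.sum_add_distrib, Fintype.sum_prod_type, Finset.sum_ite_eq', Finset.mem_univ, if_true]
  rw [Finset.sum_comm (f := fun x y => if x = p.1 then b * Q p.2 y * g (x, y) else 0)]
  simp only [Finset.sum_ite_eq', Finset.mem_univ, if_true, Finset.mul_sum, mul_assoc]

lemma sum_mul_cartesianKernel (a b : ℝ) (P : V → V → ℝ) (Q : V' → V' → ℝ)
    (g : V × V' → ℝ) (p : V × V') :
    ∑ q, g q * cartesianKernel a b P Q q p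
      = a * ∑ y, g (y, p.2) * P y p.1 + b * ∑ y', g (p.1, y') * Q y' p.2 := by
  simp only [cartesianKernel, mul_add, mul_ite, mul_one, mul_zero,
    Finset.sum_add_distrib, Fintype.sum_prod_type, Finset.sum_ite_eq, Finset.mem_univ, if_true]
  rw [Finset.sum_comm (f := fun x y => if p.1 = x then g (x, y) * (b * Q y p.2) else 0)]
  simp only [Finset.sum_ite_eq, Finset.mem_univ, if_true, Finset.mul_sum]
  congr 1 <;> exact Finset.sum_congr rfl fun _ _ => by ring

lemma chungL_cartesianKernel {a b : ℝ} (hab : a + b = 1) {P : V → V → ℝ} {Q : V' → V' → ℝ}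
    {x : V} {x' : V'} (hP : ∑ y, P x y = 1) (hQ : ∑ y', Q x' y' = 1) (f : V → ℝ) (f' : V' → ℝ) :
    chungL (cartesianKernel a b P Q) (fun p => f p.1 + f' p.2) (x, x')
      = a * chungL P f x + b * chungL Q f' x' := by
  simp only [chungL, sum_cartesianKernel_mul, mul_add, Finset.sum_add_distrib, ← Finset.sum_mul,
    hP, hQ]
  linear_combination (-(f x + f' x')) * hab

lemma stationary_cartesianKernel {a b : ℝ} (hab : a + b = 1) {P : V → V → ℝ}
    {Q : V' → V' → ℝ} {m : V → ℝ} {m' : V' → ℝ} (hm : ∀ x, m x = ∑ y, m y * P y x)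
    (hm' : ∀ x', m' x' = ∑ y', m' y' * Q y' x') (p : V × V') :
    m p.1 * m' p.2 = ∑ q, m q.1 * m' q.2 * cartesianKernel a b P Q q p := by
  rw [sum_mul_cartesianKernel]
  simp only [mul_right_comm _ (m' p.2), ← Finset.sum_mul, ← hm, mul_assoc (m p.1),
    ← Finset.mul_sum, ← hm']
  linear_combination (-(m p.1 * m' p.2)) * hab

end Cartesian

section Product

variable {V V' : Type*} [Fintype V] [Fintype V'] {μ : V → V → ℝ} {μ' : V' → V' → ℝ} {α β : ℝ}

lemma prodW_nonneg (hnn : Nonneg μ) (hnn' : Nonneg μ') (hα : 0 ≤ α) (hβ : 0 ≤ β) :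
    Nonneg (prodW μ μ' α β) := fun p q => by
  have := vdeg_nonneg hnn p.1
  have := vdeg_nonneg hnn' p.2
  have := hnn p.1 q.1
  have := hnn' p.2 q.2
  unfold prodW
  positivity

lemma prodW_ne_zero {p q : V × V'} (h : prodW μ μ' α β p q ≠ 0) :
    (∃ x y, μ x y ≠ 0) ∧ ∃ x' y', μ' x' y' ≠ 0 := by
  by_contra! hzero
  apply h
  by_cases hμ : ∀ x y, μ x y = 0
  · simp [prodW, vdeg, hμ]
  · push Not at hμ
    simp [prodW, vdeg, hzero hμ]

lemma vdeg_prodW (x : V) (x' : V') :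
    vdeg (prodW μ μ' α β) (x, x') = (α + β) * (vdeg μ x * vdeg μ' x') := by
  simp only [vdeg, prodW, Fintype.sum_prod_type, mul_ite, mul_one, mul_zero,
    Finset.sum_add_distrib, Finset.sum_ite_eq', Finset.mem_univ, if_true, Finset.sum_ite_irrel,
    Finset.sum_const_zero, ← Finset.mul_sum]
  ring

lemma transP_prodW (hdeg : ∀ x, vdeg μ x ≠ 0) (hdeg' : ∀ x', vdeg μ' x' ≠ 0)
    (hαβ : α + β ≠ 0) :
    transP (prodW μ μ' α β)
      = cartesianKernel (β / (α + β)) (α / (α + β)) (transP μ) (transP μ') := by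
  ext ⟨x, x'⟩ ⟨y, y'⟩
  have := hdeg x
  have := hdeg' x'
  simp only [transP, vdeg_prodW, cartesianKernel, prodW]
  field_simp

lemma meanK_prodW {m : V → ℝ} {m' : V' → ℝ} (hm : ∀ x, 0 < m x) (hm' : ∀ x', 0 < m' x')
    (hdeg : ∀ x, vdeg μ x ≠ 0) (hdeg' : ∀ x', vdeg μ' x' ≠ 0) (hαβ : α + β ≠ 0) :
    meanK (prodW μ μ' α β) (fun p => m p.1 * m' p.2)
      = cartesianKernel (β / (α + β)) (α / (α + β)) (meanK μ m) (meanK μ' m') := by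
  ext ⟨x, x'⟩ ⟨y, y'⟩
  have := (hm x).ne'
  have := (hm' x').ne'
  simp only [meanK, transP_prodW hdeg hdeg' hαβ, cartesianKernel]
  rcases eq_or_ne y x with rfl | hy <;> rcases eq_or_ne y' x' with rfl | hy' <;>
    simp only [↓reduceIte, mul_one, mul_zero, add_zero, zero_add, zero_div, ne_eq, zero_eq_mul,
      or_self, not_false_eq_true, Ne.symm, div_self, one_mul, add_self_div_two, *] <;>
    field_simp

lemma isPerron_prodW {m : V → ℝ} {m' : V' → ℝ} (hm : IsPerron μ m) (hm' : IsPerron μ' m')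
    (hdeg : ∀ x, vdeg μ x ≠ 0) (hdeg' : ∀ x', vdeg μ' x' ≠ 0) (hαβ : α + β ≠ 0) :
    IsPerron (prodW μ μ' α β) (fun p => m p.1 * m' p.2) := by
  have hab : β / (α + β) + α / (α + β) = 1 := by field_simp; ring
  refine ⟨fun p => mul_pos (hm.1 p.1) (hm'.1 p.2), ?_, ?_⟩
  · rw [Fintype.sum_prod_type, ← Finset.sum_mul_sum, hm.2.1, hm'.2.1, one_mul]
  · rw [transP_prodW hdeg hdeg' hαβ]
    exact stationary_cartesianKernel hab hm.2.2 hm'.2.2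

lemma pos_of_prodW_pos (hnn : Nonneg μ) (hnn' : Nonneg μ') {p q : V × V'}
    (h : 0 < prodW μ μ' α β p q) :
    (q.2 = p.2 ∧ 0 < μ p.1 q.1) ∨ (q.1 = p.1 ∧ 0 < μ' p.2 q.2) := by
  by_contra! hneg
  have h1 : μ p.1 q.1 * (if q.2 = p.2 then 1 else 0) = 0 := by
    split_ifs with hq
    · rw [le_antisymm (hneg.1 hq) (hnn _ _), zero_mul]
    · rw [mul_zero]
  have h2 : μ' p.2 q.2 * (if q.1 = p.1 then 1 else 0) = 0 := by
    split_ifs with hq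
    · rw [le_antisymm (hneg.2 hq) (hnn' _ _), zero_mul]
    · rw [mul_zero]
  simp only [prodW, mul_assoc, h1, h2, mul_zero, add_zero, lt_self_iff_false] at h

lemma hasPathLen_prodW_fst (hnn : Nonneg μ) (hnn' : Nonneg μ') (hα : 0 ≤ α) (hβ : 0 < β)
    {x' : V'} (hx' : 0 < vdeg μ' x') {x y : V} {k : ℕ} (h : HasPathLen μ x y k) :
    HasPathLen (prodW μ μ' α β) (x, x') (y, x') k :=
  h.map (fun a => (a, x')) fun a b hab => by
    have := vdeg_nonneg hnn a
    have := hnn' x' x'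
    simp only [prodW, ↓reduceIte, mul_one]
    exact add_pos_of_pos_of_nonneg (by positivity) (by positivity)

lemma hasPathLen_prodW_snd (hnn : Nonneg μ) (hnn' : Nonneg μ') (hα : 0 < α) (hβ : 0 ≤ β)
    {x : V} (hx : 0 < vdeg μ x) {x' y' : V'} {l : ℕ} (h : HasPathLen μ' x' y' l) :
    HasPathLen (prodW μ μ' α β) (x, x') (x, y') l :=
  h.map (fun a' => (x, a')) fun a' b' hab => by
    have := vdeg_nonneg hnn' a'
    have := hnn x x
    simp only [prodW, ↓reduceIte, mul_one]
    exact add_pos_of_nonneg_of_pos (by positivity) (by positivity)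

lemma hasPathLen_prodW (hnn : Nonneg μ) (hnn' : Nonneg μ') (hα : 0 < α) (hβ : 0 < β)
    (hdeg : ∀ x, 0 < vdeg μ x) (hdeg' : ∀ x', 0 < vdeg μ' x') {x y : V} {x' y' : V'} {k l : ℕ}
    (h : HasPathLen μ x y k) (h' : HasPathLen μ' x' y' l) :
    HasPathLen (prodW μ μ' α β) (x, x') (y, y') (k + l) :=
  (hasPathLen_prodW_fst hnn hnn' hα.le hβ (hdeg' x') h).append
    (hasPathLen_prodW_snd hnn hnn' hα hβ.le (hdeg y) h')

lemma exists_hasPathLen_of_hasPathLen_prodW (hnn : Nonneg μ) (hnn' : Nonneg μ') {x y : V}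
    {x' y' : V'} {n : ℕ} (h : HasPathLen (prodW μ μ' α β) (x, x') (y, y') n) :
    ∃ k l, k + l ≤ n ∧ HasPathLen μ x y k ∧ HasPathLen μ' x' y' l := by
  induction n generalizing x x' with
  | zero =>
    obtain ⟨rfl, rfl⟩ := Prod.mk.inj (hasPathLen_zero_iff.1 h)
    exact ⟨0, 0, le_rfl, hasPathLen_zero_iff.2 rfl, hasPathLen_zero_iff.2 rfl⟩
  | succ n ih =>
    obtain ⟨⟨z, z'⟩, hz, hzy⟩ := hasPathLen_succ_iff.1 h
    obtain ⟨k, l, hkl, hk, hl⟩ := ih hzy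
    rcases pos_of_prodW_pos hnn hnn' hz with ⟨rfl, hxz⟩ | ⟨rfl, hxz⟩
    · exact ⟨k + 1, l, by omega, hasPathLen_succ_iff.2 ⟨z, hxz, hk⟩, hl⟩
    · exact ⟨k, l + 1, by omega, hk, hasPathLen_succ_iff.2 ⟨z', hxz, hl⟩⟩

lemma gdist_prodW (hnn : Nonneg μ) (hnn' : Nonneg μ') (hα : 0 < α) (hβ : 0 < β)
    (hdeg : ∀ x, 0 < vdeg μ x) (hdeg' : ∀ x', 0 < vdeg μ' x')
    (hc : StronglyConnectedW μ) (hc' : StronglyConnectedW μ') (x y : V) (x' y' : V') :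
    gdist (prodW μ μ' α β) (x, x') (y, y') = gdist μ x y + gdist μ' x' y' := by
  have hp := hasPathLen_prodW hnn hnn' hα hβ hdeg hdeg' (Nat.find_spec (hc x y))
    (Nat.find_spec (hc' x' y'))
  have hcp : ∃ n, HasPathLen (prodW μ μ' α β) (x, x') (y, y') n := ⟨_, hp⟩
  obtain ⟨k, l, hkl, hk, hl⟩ :=
    exists_hasPathLen_of_hasPathLen_prodW hnn hnn' (Nat.find_spec hcp)
  have hle := Nat.find_le (h := hcp) hp
  have hk_min := Nat.find_le (h := hc x y) hk
  have hl_min := Nat.find_le (h := hc' x' y') hl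
  rw [gdist_eq_find (hc x y), gdist_eq_find (hc' x' y'), gdist_eq_find hcp]
  exact_mod_cast (by omega : Nat.find hcp = Nat.find (hc x y) + Nat.find (hc' x' y'))

lemma stronglyConnectedW_prodW (hnn : Nonneg μ) (hnn' : Nonneg μ') (hα : 0 < α) (hβ : 0 < β)
    (hdeg : ∀ x, 0 < vdeg μ x) (hdeg' : ∀ x', 0 < vdeg μ' x')
    (hc : StronglyConnectedW μ) (hc' : StronglyConnectedW μ') :
    StronglyConnectedW (prodW μ μ' α β) := fun p q =>
  let ⟨k, hk⟩ := hc p.1 q.1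
  let ⟨l, hl⟩ := hc' p.2 q.2
  ⟨k + l, hasPathLen_prodW hnn hnn' hα hβ hdeg hdeg' hk hl⟩

end Product

theorem prod_dist_and_laplacian_general
    {V V' : Type*} [Fintype V] [Fintype V']
    (μ : V → V → ℝ) (μ' : V' → V' → ℝ) (m : V → ℝ) (m' : V' → ℝ)
    (hnn : Nonneg μ) (hconn : StronglyConnectedW μ)
    (hm : IsPerron μ m)
    (hnn' : Nonneg μ') (hconn' : StronglyConnectedW μ')
    (hm' : IsPerron μ' m')
    (α β : ℝ) (hα : 0 < α) (hβ : 0 < β)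
    (M : V × V' → ℝ) (hM : IsPerron (prodW μ μ' α β) M) :
    (∀ (x y : V) (x' y' : V'),
        gdist (prodW μ μ' α β) (x, x') (y, y') = gdist μ x y + gdist μ' x' y') ∧
    (∀ (f : V → ℝ) (f' : V' → ℝ) (x : V) (x' : V'),
        chungL (meanK (prodW μ μ' α β) M) (fun p => f p.1 + f' p.2) (x, x')
          = β / (α + β) * chungL (meanK μ m) f x
            + α / (α + β) * chungL (meanK μ' m') f' x') := by
  -- `hM` forces an edge in the product, hence in both factors, so all degrees are positive.
  obtain ⟨p, q, hpq⟩ := hM.exists_ne_zero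
  obtain ⟨hμ, hμ'⟩ := prodW_ne_zero hpq
  have hdeg := vdeg_pos_s9 hnn hconn hμ
  have hdeg' := vdeg_pos_s9 hnn' hconn' hμ'
  have hdeg₀ : ∀ x, vdeg μ x ≠ 0 := fun x => (hdeg x).ne'
  have hdeg₀' : ∀ x', vdeg μ' x' ≠ 0 := fun x' => (hdeg' x').ne'
  have hαβ : α + β ≠ 0 := by positivity
  refine ⟨gdist_prodW hnn hnn' hα hβ hdeg hdeg' hconn hconn', fun f f' x x' => ?_⟩
  have hM_eq : M = fun p => m p.1 * m' p.2 :=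
    IsPerron.unique (prodW_nonneg hnn hnn' hα.le hβ.le)
      (stronglyConnectedW_prodW hnn hnn' hα hβ hdeg hdeg' hconn hconn')
      (isPerron_prodW hm hm' hdeg₀ hdeg₀' hαβ) hM
  rw [hM_eq, meanK_prodW hm.1 hm'.1 hdeg₀ hdeg₀' hαβ]
  exact chungL_cartesianKernel (by field_simp; ring) (sum_meanK hm (hdeg₀ x))
    (sum_meanK hm' (hdeg₀' x')) f f'

/-- ℓ¹-distance and Laplacian formulas on the weighted Cartesian product. -/
theorem prod_dist_and_laplacian
    {V V' : Type*} [Fintype V] [Fintype V']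
    (μ : V → V → ℝ) (μ' : V' → V' → ℝ) (m : V → ℝ) (m' : V' → ℝ)
    (hnn : Nonneg μ) (hsimple : IsSimpleW μ) (hconn : StronglyConnectedW μ)
    (hm : IsPerron μ m)
    (hnn' : Nonneg μ') (hsimple' : IsSimpleW μ') (hconn' : StronglyConnectedW μ')
    (hm' : IsPerron μ' m')
    (α β : ℝ) (hα : 0 < α) (hβ : 0 < β)
    (M : V × V' → ℝ) (hM : IsPerron (prodW μ μ' α β) M) :
    (∀ (x y : V) (x' y' : V'),
        gdist (prodW μ μ' α β) (x, x') (y, y') = gdist μ x y + gdist μ' x' y') ∧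
    (∀ (f : V → ℝ) (f' : V' → ℝ) (x : V) (x' : V'),
        chungL (meanK (prodW μ μ' α β) M) (fun p => f p.1 + f' p.2) (x, x')
          = β / (α + β) * chungL (meanK μ m) f x
            + α / (α + β) * chungL (meanK μ' m') f' x') :=
  prod_dist_and_laplacian_general μ μ' m m' hnn hconn hm hnn' hconn' hm' α β hα hβ M hM
end
end
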